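/- arXiv:1201.1969 — 3 statements merged into one kernel-verified Lean document; each statement's English description precedes it below -/
import Mathlib

section
/- Let z ∈ R be nonzero with weighted total degree t > 1, and let z' be the leading form of z. Then for every n ≥ 0, the element f_n(z) has weighted total degree d^n·t, and its leading form equals z'^{d^n}. -/
open MvPolynomial

/-- Variable index type for the ring
`R = k[ζ_1,…,ζ_N, ξ_1,…,ξ_N, a_1,…,a_{d-1}, b_0,…,b_{d-e-1}]` with `N = 2d-1-e`. -/
abbrev Vars (d e : ℕ) : Type :=
  (Fin (2 * d - 1 - e) ⊕ Fin (2 * d - 1 - e)) ⊕ (Fin (d - 1) ⊕ Fin (d - e))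

/-- The weights: `deg ζ_i = 1`, `deg ξ_i = e`, `deg a_i = d - i`, `deg b_j = d - e - j`. -/
noncomputable def wt (d e : ℕ) : Vars d e → ℕ
  | .inl (.inl _) => 1
  | .inl (.inr _) => e
  | .inr (.inl i) => d - (i.1 + 1)
  | .inr (.inr j) => d - e - j.1

variable (k : Type) [CommRing k]

/-- The critical point `ζ_i` (indexing `1 ≤ i ≤ N` by `Fin N`). -/
noncomputable def zeta (d e : ℕ) (i : Fin (2 * d - 1 - e)) : MvPolynomial (Vars d e) k :=
  X (.inl (.inl i))

/-- The critical value `ξ_i` (indexing `1 ≤ i ≤ N` by `Fin N`). -/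
noncomputable def xi (d e : ℕ) (i : Fin (2 * d - 1 - e)) : MvPolynomial (Vars d e) k :=
  X (.inl (.inr i))

/-- The coefficient `a_i`, with the conventions `a_0 = 0`, `a_d = 1`. -/
noncomputable def coefA (d e : ℕ) (i : ℕ) : MvPolynomial (Vars d e) k :=
  if i = d then 1
  else if h : 0 < i ∧ i < d then X (.inr (.inl ⟨i - 1, by omega⟩)) else 0

/-- The coefficient `b_j`, with the convention `b_{d-e} = 1`. -/
noncomputable def coefB (d e : ℕ) (j : ℕ) : MvPolynomial (Vars d e) k :=
  if j = d - e then 1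
  else if h : j < d - e then X (.inr (.inr ⟨j, h⟩)) else 0

/-- `f(z) = ∑_{i=1}^{d} a_i z^i` (note `a_0 = 0`). -/
noncomputable def fpoly (d e : ℕ) (z : MvPolynomial (Vars d e) k) : MvPolynomial (Vars d e) k :=
  ∑ i ∈ Finset.range (d + 1), coefA k d e i * z ^ i

/-- `g(z) = ∑_{j=0}^{d-e} b_j z^j`. -/
noncomputable def gpoly (d e : ℕ) (z : MvPolynomial (Vars d e) k) : MvPolynomial (Vars d e) k :=
  ∑ j ∈ Finset.range (d - e + 1), coefB k d e j * z ^ j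

/-- The pair `(f_n(z), g_n(z))` defined recursively by `f_0(z) = z`, `g_0(z) = 1`,
`f_n(z) = ∑ a_i f_{n-1}(z)^i g_{n-1}(z)^{d-i}`, `g_n(z) = ∑ b_i f_{n-1}(z)^i g_{n-1}(z)^{d-i}`. -/
noncomputable def FG (d e : ℕ) : ℕ → MvPolynomial (Vars d e) k →
    MvPolynomial (Vars d e) k × MvPolynomial (Vars d e) k
  | 0, z => (z, 1)
  | n + 1, z =>
    (∑ i ∈ Finset.range (d + 1), coefA k d e i * (FG d e n z).1 ^ i * (FG d e n z).2 ^ (d - i),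
     ∑ i ∈ Finset.range (d - e + 1),
        coefB k d e i * (FG d e n z).1 ^ i * (FG d e n z).2 ^ (d - i))

/-- The critical point equation in degree `κ`:
`∑_{i+j=κ+1} (i-j) a_i b_j - e (-1)^{N-κ} σ_{N-κ}(ζ_1,…,ζ_N)`. -/
noncomputable def critEq (d e : ℕ) (κ : ℕ) : MvPolynomial (Vars d e) k :=
  (∑ i ∈ Finset.range (d + 1), ∑ j ∈ Finset.range (d - e + 1),
      if i + j = κ + 1 then (((i : ℤ) - (j : ℤ) : ℤ) : MvPolynomial (Vars d e) k) *
        coefA k d e i * coefB k d e j else 0)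
    - (e : MvPolynomial (Vars d e) k) * (-1) ^ (2 * d - 1 - e - κ) *
      ∑ s ∈ Finset.powersetCard (2 * d - 1 - e - κ) (Finset.univ : Finset (Fin (2 * d - 1 - e))),
        ∏ i ∈ s, zeta k d e i

/-- The leading form of `p`: its weighted-homogeneous component of degree equal to its
weighted total degree. -/
noncomputable def leadForm (d e : ℕ) (p : MvPolynomial (Vars d e) k) : MvPolynomial (Vars d e) k :=
  weightedHomogeneousComponent (wt d e) (weightedTotalDegree (wt d e) p) p

/-! Writing `f_{n+1} = f_n^d + ∑_{i<d} a_i f_n^i g_n^{d-i}`, one shows by induction that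
`deg g_n ≤ deg f_n - 2`. Then the factor `g_n^{d-i}` loses at least `2(d-i)` in degree against
`f_n^{d-i}`, more than `deg a_i = d - i`, so every term of the sum has degree `< d · deg f_n`
and `f_{n+1}` has the leading form of `f_n^d`, which over a domain is the `d`-th power of the
leading form of `f_n`. In `g_{n+1}` the term with `f_n^i g_n^{d-i}` loses `(d - i) + e ≥ 2`, which
keeps the gap. -/

namespace MvPolynomial

variable {σ R : Type*} {w : σ → ℕ}

section CommSemiring

variable [CommSemiring R]

theorem weightedTotalDegree_add_le (p q : MvPolynomial σ R) :
    weightedTotalDegree w (p + q) ≤ max (weightedTotalDegree w p) (weightedTotalDegree w q) :=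
  AddMonoidAlgebra.supDegree_add_le

theorem weightedTotalDegree_mul_le (p q : MvPolynomial σ R) :
    weightedTotalDegree w (p * q) ≤ weightedTotalDegree w p + weightedTotalDegree w q :=
  AddMonoidAlgebra.supDegree_mul_le (map_add _)

theorem weightedTotalDegree_pow_le (p : MvPolynomial σ R) (n : ℕ) :
    weightedTotalDegree w (p ^ n) ≤ n * weightedTotalDegree w p :=
  AddMonoidAlgebra.sup_support_pow_le (by simp) (fun a b => (map_add _ a b).le) n p

theorem weightedTotalDegree_sum_le {ι : Type*} {s : Finset ι} {f : ι → MvPolynomial σ R}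
    {B : ℕ} (h : ∀ i ∈ s, weightedTotalDegree w (f i) ≤ B) :
    weightedTotalDegree w (∑ i ∈ s, f i) ≤ B :=
  AddMonoidAlgebra.supDegree_sum_le.trans (Finset.sup_le h)

theorem weightedTotalDegree_sum_lt {ι : Type*} {s : Finset ι} {f : ι → MvPolynomial σ R}
    {B : ℕ} (hB : 0 < B) (h : ∀ i ∈ s, weightedTotalDegree w (f i) < B) :
    weightedTotalDegree w (∑ i ∈ s, f i) < B :=
  AddMonoidAlgebra.supDegree_sum_le.trans_lt ((Finset.sup_lt_iff hB).2 h)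

theorem weightedTotalDegree_mul_pow_mul_pow_le (c F G : MvPolynomial σ R) (i j : ℕ) :
    weightedTotalDegree w (c * F ^ i * G ^ j) ≤
      weightedTotalDegree w c + i * weightedTotalDegree w F + j * weightedTotalDegree w G :=
  calc weightedTotalDegree w (c * F ^ i * G ^ j)
      ≤ weightedTotalDegree w c + weightedTotalDegree w (F ^ i) +
          weightedTotalDegree w (G ^ j) :=
        (weightedTotalDegree_mul_le _ _).trans (by grw [weightedTotalDegree_mul_le])
    _ ≤ _ := by grw [weightedTotalDegree_pow_le F, weightedTotalDegree_pow_le G]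

theorem IsWeightedHomogeneous.weightedTotalDegree_le {p : MvPolynomial σ R} {m : ℕ}
    (hp : IsWeightedHomogeneous w p m) : weightedTotalDegree w p ≤ m :=
  Finset.sup_le fun _ hc => (hp (mem_support_iff.1 hc)).le

end CommSemiring

variable [CommRing R]

variable (w) in
structure IsWeightedLeadingForm (p P : MvPolynomial σ R) (m : ℕ) : Prop where
  isWeightedHomogeneous : IsWeightedHomogeneous w P m
  ne_zero : P ≠ 0
  weightedTotalDegree_sub_lt : weightedTotalDegree w (p - P) < m

namespace IsWeightedLeadingForm

variable {p q P Q : MvPolynomial σ R} {m n : ℕ}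

theorem weightedHomogeneousComponent_eq (h : IsWeightedLeadingForm w p P m) :
    weightedHomogeneousComponent w m p = P := by
  have hp : p = P + (p - P) := by ring
  rw [hp, map_add, weightedHomogeneousComponent_eq_self h.isWeightedHomogeneous,
    weightedHomogeneousComponent_eq_zero _ _ h.weightedTotalDegree_sub_lt, add_zero]

theorem weightedTotalDegree_eq (h : IsWeightedLeadingForm w p P m) :
    weightedTotalDegree w p = m := by
  refine le_antisymm ?_ (not_lt.1 fun hlt => h.ne_zero ?_)
  · have hp : p = P + (p - P) := by ring
    rw [hp]
    exact (weightedTotalDegree_add_le _ _).trans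
      (max_le h.isWeightedHomogeneous.weightedTotalDegree_le h.weightedTotalDegree_sub_lt.le)
  · rw [← h.weightedHomogeneousComponent_eq, weightedHomogeneousComponent_eq_zero _ _ hlt]

theorem add_of_weightedTotalDegree_lt (h : IsWeightedLeadingForm w p P m)
    (hq : weightedTotalDegree w q < m) : IsWeightedLeadingForm w (p + q) P m where
  isWeightedHomogeneous := h.isWeightedHomogeneous
  ne_zero := h.ne_zero
  weightedTotalDegree_sub_lt := by
    rw [add_sub_right_comm]
    exact (weightedTotalDegree_add_le _ _).trans_lt (max_lt h.weightedTotalDegree_sub_lt hq)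

theorem mul [IsDomain R] (hp : IsWeightedLeadingForm w p P m)
    (hq : IsWeightedLeadingForm w q Q n) : IsWeightedLeadingForm w (p * q) (P * Q) (m + n) where
  isWeightedHomogeneous := hp.isWeightedHomogeneous.mul hq.isWeightedHomogeneous
  ne_zero := mul_ne_zero hp.ne_zero hq.ne_zero
  weightedTotalDegree_sub_lt := by
    have hsplit : p * q - P * Q = (p - P) * q + P * (q - Q) := by ring
    have hleft : weightedTotalDegree w ((p - P) * q) < m + n := by
      grw [weightedTotalDegree_mul_le, hq.weightedTotalDegree_eq]
      exact Nat.add_lt_add_right hp.weightedTotalDegree_sub_lt n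
    have hright : weightedTotalDegree w (P * (q - Q)) < m + n := by
      grw [weightedTotalDegree_mul_le, hp.isWeightedHomogeneous.weightedTotalDegree_le]
      exact Nat.add_lt_add_left hq.weightedTotalDegree_sub_lt m
    rw [hsplit]
    exact (weightedTotalDegree_add_le _ _).trans_lt (max_lt hleft hright)

theorem pow [IsDomain R] (h : IsWeightedLeadingForm w p P m) (hn : n ≠ 0) :
    IsWeightedLeadingForm w (p ^ n) (P ^ n) (n * m) := by
  induction n, Nat.one_le_iff_ne_zero.2 hn using Nat.le_induction with
  | base => simpa using h
  | succ n _ ih =>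
    rw [pow_succ, pow_succ, Nat.succ_mul]
    exact (ih (by omega)).mul h

end IsWeightedLeadingForm

theorem isWeightedLeadingForm_weightedHomogeneousComponent {p : MvPolynomial σ R}
    (hp : 0 < weightedTotalDegree w p) :
    IsWeightedLeadingForm w p (weightedHomogeneousComponent w (weightedTotalDegree w p) p)
      (weightedTotalDegree w p) := by
  classical
  have htail : weightedTotalDegree w
      (p - weightedHomogeneousComponent w (weightedTotalDegree w p) p) <
      weightedTotalDegree w p := by
    refine (Finset.sup_lt_iff hp).2 fun c hc => ?_
    rw [mem_support_iff, coeff_sub, coeff_weightedHomogeneousComponent] at hc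
    split_ifs at hc with hc_top
    · exact absurd (sub_self _) hc
    · rw [sub_zero] at hc
      exact (le_weightedTotalDegree w (mem_support_iff.2 hc)).lt_of_ne hc_top
  refine ⟨weightedHomogeneousComponent_isWeightedHomogeneous _ _, fun h0 => ?_, htail⟩
  rw [h0, sub_zero] at htail
  exact htail.false

end MvPolynomial

section Iteration

variable {k} {d e : ℕ}

theorem isWeightedHomogeneous_coefA (i : ℕ) :
    IsWeightedHomogeneous (wt d e) (coefA k d e i) (d - i) := by
  unfold coefA
  split_ifs with h_top h_mid
  · simpa [h_top] using isWeightedHomogeneous_one k (wt d e)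
  · convert isWeightedHomogeneous_X k (wt d e) (.inr (.inl ⟨i - 1, by omega⟩)) using 1
    change d - i = d - (i - 1 + 1)
    omega
  · exact isWeightedHomogeneous_zero k _ _

theorem isWeightedHomogeneous_coefB (j : ℕ) :
    IsWeightedHomogeneous (wt d e) (coefB k d e j) (d - e - j) := by
  unfold coefB
  split_ifs with h_top h_low
  · simpa [h_top] using isWeightedHomogeneous_one k (wt d e)
  · exact isWeightedHomogeneous_X k (wt d e) (.inr (.inr ⟨j, h_low⟩))
  · exact isWeightedHomogeneous_zero k _ _

theorem weightedTotalDegree_coefA_term_lt {F G : MvPolynomial (Vars d e) k} {i M : ℕ}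
    (hi : i < d) (hF : weightedTotalDegree (wt d e) F ≤ M)
    (hG : weightedTotalDegree (wt d e) G + 2 ≤ M) :
    weightedTotalDegree (wt d e) (coefA k d e i * F ^ i * G ^ (d - i)) < d * M := by
  grw [weightedTotalDegree_mul_pow_mul_pow_le,
    (isWeightedHomogeneous_coefA i).weightedTotalDegree_le, hF]
  obtain ⟨j, rfl⟩ : ∃ j, d = i + (j + 1) := ⟨d - i - 1, by omega⟩
  rw [show i + (j + 1) - i = j + 1 by omega]
  nlinarith

theorem weightedTotalDegree_coefB_term_add_two_le {F G : MvPolynomial (Vars d e) k} {i M : ℕ}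
    (he : 2 ≤ e) (hie : i + e ≤ d) (hF : weightedTotalDegree (wt d e) F ≤ M)
    (hG : weightedTotalDegree (wt d e) G + 2 ≤ M) :
    weightedTotalDegree (wt d e) (coefB k d e i * F ^ i * G ^ (d - i)) + 2 ≤ d * M := by
  grw [weightedTotalDegree_mul_pow_mul_pow_le,
    (isWeightedHomogeneous_coefB i).weightedTotalDegree_le, hF]
  obtain ⟨u, rfl⟩ : ∃ u, d = i + u + e := ⟨d - e - i, by omega⟩
  rw [show i + u + e - e - i = u by omega, show i + u + e - i = u + e by omega]
  nlinarith

theorem FG_succ_fst_eq (n : ℕ) (z : MvPolynomial (Vars d e) k) :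
    (FG k d e (n + 1) z).1 = (FG k d e n z).1 ^ d +
      ∑ i ∈ Finset.range d,
        coefA k d e i * (FG k d e n z).1 ^ i * (FG k d e n z).2 ^ (d - i) := by
  rw [FG, Finset.sum_range_succ, add_comm]
  simp [coefA]

theorem isWeightedLeadingForm_FG [IsDomain k] (he : 2 ≤ e) (hed : e ≤ d)
    {z Z : MvPolynomial (Vars d e) k} {t : ℕ} (hz : IsWeightedLeadingForm (wt d e) z Z t)
    (ht : 2 ≤ t) (n : ℕ) :
    IsWeightedLeadingForm (wt d e) (FG k d e n z).1 (Z ^ d ^ n) (d ^ n * t) ∧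
      weightedTotalDegree (wt d e) (FG k d e n z).2 + 2 ≤ d ^ n * t := by
  induction n with
  | zero =>
    have h_one : weightedTotalDegree (wt d e) (1 : MvPolynomial (Vars d e) k) ≤ 0 :=
      (isWeightedHomogeneous_one k _).weightedTotalDegree_le
    exact ⟨by simpa [FG] using hz, by simp only [FG, pow_zero, one_mul]; omega⟩
  | succ n ih =>
    obtain ⟨hF, hG⟩ := ih
    set M := d ^ n * t
    have hd : d ≠ 0 := by omega
    have hM : 2 ≤ d * M := by nlinarith
    have hFM := hF.weightedTotalDegree_eq.le
    have hdeg : d ^ (n + 1) * t = d * M := by ring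
    rw [hdeg, pow_succ, pow_mul]
    constructor
    · rw [FG_succ_fst_eq]
      exact (hF.pow hd).add_of_weightedTotalDegree_lt <| weightedTotalDegree_sum_lt (by omega)
        fun i hi => weightedTotalDegree_coefA_term_lt (Finset.mem_range.1 hi) hFM hG
    · have hsum := weightedTotalDegree_sum_le (s := Finset.range (d - e + 1)) (B := d * M - 2)
        fun i hi => Nat.le_sub_of_add_le <| weightedTotalDegree_coefB_term_add_two_le (i := i) he
          (by have := Finset.mem_range.1 hi; omega) hFM hG
      exact (Nat.le_sub_iff_add_le hM).1 hsum

end Iteration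

theorem stmt2_general (k : Type) [Field k] (d e : ℕ) (he : 2 ≤ e) (hed : e ≤ d)
    (z : MvPolynomial (Vars d e) k)
    (ht : 1 < weightedTotalDegree (wt d e) z) (n : ℕ) :
    weightedTotalDegree (wt d e) (FG k d e n z).1 = d ^ n * weightedTotalDegree (wt d e) z ∧
    leadForm k d e (FG k d e n z).1 = (leadForm k d e z) ^ (d ^ n) := by
  have hz := isWeightedLeadingForm_weightedHomogeneousComponent (w := wt d e) (p := z) (by omega)
  have hf := (isWeightedLeadingForm_FG he hed hz ht n).1
  refine ⟨hf.weightedTotalDegree_eq, ?_⟩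
  rw [leadForm, hf.weightedTotalDegree_eq, hf.weightedHomogeneousComponent_eq]
  rfl

/-- if `z ≠ 0` has weighted total degree `t > 1` and leading form `z'`, then
for every `n ≥ 0`, `f_n(z)` has weighted total degree `d^n · t` and leading form `z'^{d^n}`. -/
theorem stmt2 (k : Type) [Field k] (d e : ℕ) (hd : 2 ≤ d) (he : 2 ≤ e) (hed : e ≤ d)
    (z : MvPolynomial (Vars d e) k) (hz : z ≠ 0)
    (ht : 1 < weightedTotalDegree (wt d e) z) (n : ℕ) :
    weightedTotalDegree (wt d e) (FG k d e n z).1 = d ^ n * weightedTotalDegree (wt d e) z ∧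
    leadForm k d e (FG k d e n z).1 = (leadForm k d e z) ^ (d ^ n) :=
  stmt2_general k d e he hed z ht n
end

section
/- Let n > m ≥ 1 be integers and let 1 ≤ i ≤ N. Then the element P_i = f_{m−1}(ξ_i)·g_{n−1}(ξ_i) − f_{n−1}(ξ_i)·g_{m−1}(ξ_i) of R has weighted total degree e·(d^{n−1} + d^{m−1} − e^{m−1}), and its leading form equals −ξ_i^{d^{n−1} + d^{m−1} − e^{m−1}}. -/
open MvPolynomial

variable (k : Type) [CommRing k]

/-!
Give `ξ_i` weight `e`. By induction on `n`, `f_n(ξ_i) = ξ_i^{d^n} + (lower weight)` and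
`g_n(ξ_i) = ξ_i^{d^n - e^n} + (lower weight)`: in the sums defining `f_{n+1}` and `g_{n+1}` the
term with coefficient `a_d = 1`, resp. `b_{d-e} = 1`, dominates, because each step down in the
summation index trades a factor `f_n` for a factor `g_n`, losing weight `e^{n+1} ≥ 2`, while the
weight of the coefficient grows only by `1`. The two products in `P_i` therefore have leading
monomials `ξ_i^{d^{m-1} + d^{n-1} - e^{n-1}}` and `ξ_i^{d^{n-1} + d^{m-1} - e^{m-1}}`, and
`e^{m-1} < e^{n-1}` makes the second one strictly heavier.
-/

open Finset

namespace MvPolynomial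

variable {σ R : Type*}

section CommSemiring

variable [CommSemiring R]

variable (R) in
noncomputable def weightedDegreeLE (w : σ → ℕ) (N : ℕ) : Submodule R (MvPolynomial σ R) :=
  restrictSupport R {s | Finsupp.weight w s ≤ N}

variable (R) in
noncomputable def weightedDegreeLT (w : σ → ℕ) (N : ℕ) : Submodule R (MvPolynomial σ R) :=
  restrictSupport R {s | Finsupp.weight w s < N}

variable {w : σ → ℕ} {p q : MvPolynomial σ R} {A B N : ℕ}

theorem mem_weightedDegreeLE_iff :
    p ∈ weightedDegreeLE R w N ↔ weightedTotalDegree w p ≤ N := by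
  simp only [weightedDegreeLE, mem_restrictSupport_iff, weightedTotalDegree, Finset.sup_le_iff,
    Set.subset_def, Finset.mem_coe, Set.mem_ofPred_eq]

theorem weightedDegreeLE_le_weightedDegreeLT (h : A < N) :
    weightedDegreeLE R w A ≤ weightedDegreeLT R w N :=
  restrictSupport_mono (R := R) fun _ hs => lt_of_le_of_lt hs h

theorem weightedDegreeLT_le_weightedDegreeLE :
    weightedDegreeLT R w N ≤ weightedDegreeLE R w N :=
  restrictSupport_mono (R := R) fun _ hs => le_of_lt (a := Finsupp.weight w _) hs

open scoped Pointwise in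
theorem mul_mem_restrictSupport {s t u : Set (σ →₀ ℕ)} (hp : p ∈ restrictSupport R s)
    (hq : q ∈ restrictSupport R t) (h : s + t ⊆ u) : p * q ∈ restrictSupport R u :=
  restrictSupport_mono (R := R) h (restrictSupport_add (R := R) s t ▸ Submodule.mul_mem_mul hp hq)

theorem mul_mem_weightedDegreeLE (hp : p ∈ weightedDegreeLE R w A)
    (hq : q ∈ weightedDegreeLE R w B) : p * q ∈ weightedDegreeLE R w (A + B) :=
  mul_mem_restrictSupport hp hq <| Set.add_subset_iff.2 fun _ ha _ hb => by
    simpa only [Set.mem_ofPred_eq, map_add] using add_le_add ha hb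

theorem mul_mem_weightedDegreeLT_of_le_of_lt (hp : p ∈ weightedDegreeLE R w A)
    (hq : q ∈ weightedDegreeLT R w B) : p * q ∈ weightedDegreeLT R w (A + B) :=
  mul_mem_restrictSupport hp hq <| Set.add_subset_iff.2 fun _ ha _ hb => by
    simpa only [Set.mem_ofPred_eq, map_add] using add_lt_add_of_le_of_lt ha hb

theorem one_mem_weightedDegreeLE : (1 : MvPolynomial σ R) ∈ weightedDegreeLE R w N := by
  rw [← C_1, ← monomial_zero']
  exact (monomial_mem_restrictSupport R).2 (Or.inl (by simp))

theorem pow_mem_weightedDegreeLE (hp : p ∈ weightedDegreeLE R w A) (n : ℕ) :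
    p ^ n ∈ weightedDegreeLE R w (n * A) := by
  induction n with
  | zero => simpa using one_mem_weightedDegreeLE
  | succ n ih => simpa only [pow_succ, Nat.succ_mul] using mul_mem_weightedDegreeLE ih hp

theorem X_mem_weightedDegreeLE (v : σ) :
    (X v : MvPolynomial σ R) ∈ weightedDegreeLE R w (w v) :=
  (monomial_mem_restrictSupport R).2 (Or.inl (by simp [Finsupp.weight_single]))

theorem X_pow_mem_weightedDegreeLE (v : σ) (D : ℕ) :
    (X v : MvPolynomial σ R) ^ D ∈ weightedDegreeLE R w (D * w v) :=
  pow_mem_weightedDegreeLE (X_mem_weightedDegreeLE v) D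

end CommSemiring

section CommRing

variable [CommRing R]

def HasLeadingPow (w : σ → ℕ) (v : σ) (D : ℕ) (p : MvPolynomial σ R) : Prop :=
  p - X v ^ D ∈ weightedDegreeLT R w (D * w v)

variable {w : σ → ℕ} {v : σ} {p q : MvPolynomial σ R} {D E N : ℕ}

theorem hasLeadingPow_X_pow : HasLeadingPow w v D (X v ^ D : MvPolynomial σ R) := by
  rw [HasLeadingPow, sub_self]
  exact zero_mem _

namespace HasLeadingPow

theorem mem_weightedDegreeLE (hp : HasLeadingPow w v D p) :
    p ∈ weightedDegreeLE R w (D * w v) := by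
  simpa using add_mem (weightedDegreeLT_le_weightedDegreeLE hp) (X_pow_mem_weightedDegreeLE v D)

theorem add_of_mem_weightedDegreeLT (hp : HasLeadingPow w v D p)
    (hq : q ∈ weightedDegreeLT R w (D * w v)) : HasLeadingPow w v D (q + p) := by
  simpa only [HasLeadingPow, add_sub_assoc] using add_mem hq hp

theorem mul (hp : HasLeadingPow w v D p) (hq : HasLeadingPow w v E q) :
    HasLeadingPow w v (D + E) (p * q) := by
  have key : p * q - X v ^ (D + E) = p * (q - X v ^ E) + X v ^ E * (p - X v ^ D) := by ring
  rw [HasLeadingPow, key, add_mul]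
  refine add_mem (mul_mem_weightedDegreeLT_of_le_of_lt hp.mem_weightedDegreeLE hq) ?_
  rw [add_comm]
  exact mul_mem_weightedDegreeLT_of_le_of_lt (X_pow_mem_weightedDegreeLE v E) hp

theorem pow (hp : HasLeadingPow w v D p) (n : ℕ) : HasLeadingPow w v (n * D) (p ^ n) := by
  induction n with
  | zero => simpa using hasLeadingPow_X_pow (R := R) (w := w) (v := v) (D := 0)
  | succ n ih => simpa only [pow_succ, Nat.succ_mul] using ih.mul hp

theorem sub_of_lt (hp : HasLeadingPow w v D p) (hq : HasLeadingPow w v E q) (h : D < E)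
    (hv : 0 < w v) : HasLeadingPow w v E (q - p) := by
  rw [sub_eq_neg_add]
  exact hq.add_of_mem_weightedDegreeLT <| neg_mem <|
    weightedDegreeLE_le_weightedDegreeLT (Nat.mul_lt_mul_of_pos_right h hv) hp.mem_weightedDegreeLE

theorem sum_mul_pow_mul_pow {F G : MvPolynomial σ R} {A B t n : ℕ} (hF : HasLeadingPow w v A F)
    (hG : HasLeadingPow w v B G) (hAB : B * w v + 1 < A * w v) (htn : t ≤ n)
    {c : ℕ → MvPolynomial σ R} (hct : c t = 1)
    (hc : ∀ j < t, c j ∈ weightedDegreeLE R w (t - j)) :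
    HasLeadingPow w v (t * A + (n - t) * B)
      (∑ j ∈ range (t + 1), c j * F ^ j * G ^ (n - j)) := by
  rw [sum_range_succ, hct, one_mul]
  refine ((hF.pow t).mul (hG.pow (n - t))).add_of_mem_weightedDegreeLT (sum_mem fun j hj => ?_)
  have hj : j < t := mem_range.1 hj
  refine weightedDegreeLE_le_weightedDegreeLT ?_ <| mul_mem_weightedDegreeLE
    (mul_mem_weightedDegreeLE (hc j hj) (pow_mem_weightedDegreeLE hF.mem_weightedDegreeLE j))
    (pow_mem_weightedDegreeLE hG.mem_weightedDegreeLE (n - j))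
  obtain ⟨s, rfl⟩ : ∃ s, t = j + s + 1 := ⟨t - j - 1, by omega⟩
  obtain ⟨u, rfl⟩ : ∃ u, n = j + s + 1 + u := ⟨n - (j + s + 1), by omega⟩
  -- lowering `j` by one swaps an `F` for a `G` (weight loss `≥ 2`) and raises the weight of the
  -- coefficient by at most `1`
  rw [show j + s + 1 - j = s + 1 by omega, show j + s + 1 + u - j = s + 1 + u by omega,
    Nat.add_sub_cancel_left]
  nlinarith [Nat.mul_le_mul_left (s + 1) hAB]

end HasLeadingPow

theorem weightedTotalDegree_eq_and_weightedHomogeneousComponent_eq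
    (hq : IsWeightedHomogeneous w q N) (hq0 : q ≠ 0) (h : p - q ∈ weightedDegreeLT R w N) :
    weightedTotalDegree w p = N ∧ weightedHomogeneousComponent w N p = q := by
  have hcomp : weightedHomogeneousComponent w N p = q := by
    have hlow : weightedHomogeneousComponent w N (p - q) = 0 :=
      weightedHomogeneousComponent_eq_zero' _ _ fun s hs => (h hs).ne
    rwa [map_sub, hq.weightedHomogeneousComponent_same, sub_eq_zero] at hlow
  refine ⟨le_antisymm ?_ ?_, hcomp⟩
  · have hqN : q ∈ weightedDegreeLE R w N := fun s hs => (hq (mem_support_iff.1 hs)).le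
    simpa using mem_weightedDegreeLE_iff.1
      (add_mem (weightedDegreeLT_le_weightedDegreeLE h) hqN)
  · by_contra! hlt
    exact hq0 (hcomp ▸ weightedHomogeneousComponent_eq_zero _ _ hlt)

theorem HasLeadingPow.weightedTotalDegree_neg_and_weightedHomogeneousComponent_neg [Nontrivial R]
    (hp : HasLeadingPow w v D p) :
    weightedTotalDegree w (-p) = D * w v ∧
      weightedHomogeneousComponent w (D * w v) (-p) = -X v ^ D :=
  weightedTotalDegree_eq_and_weightedHomogeneousComponent_eq
    ((isWeightedHomogeneous_X R w v).pow D).neg (by simp [X_pow_eq_monomial])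
    (by simpa only [sub_neg_eq_add, neg_add_eq_sub, neg_sub'] using neg_mem hp)

end CommRing

end MvPolynomial

theorem coefA_mem_weightedDegreeLE (d e j : ℕ) :
    coefA k d e j ∈ weightedDegreeLE k (wt d e) (d - j) := by
  unfold coefA
  split_ifs with hjd hj
  · exact one_mem_weightedDegreeLE
  · convert X_mem_weightedDegreeLE (R := k) (w := wt d e) _ using 2
    simp only [wt]
    omega
  · exact zero_mem _

theorem coefB_mem_weightedDegreeLE (d e j : ℕ) :
    coefB k d e j ∈ weightedDegreeLE k (wt d e) (d - e - j) := by
  unfold coefB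
  split_ifs with hjd hj
  · exact one_mem_weightedDegreeLE
  · exact X_mem_weightedDegreeLE (w := wt d e) (.inr (.inr ⟨j, hj⟩))
  · exact zero_mem _

theorem hasLeadingPow_FG {d e : ℕ} (he : 2 ≤ e) (hed : e ≤ d) (i : Fin (2 * d - 1 - e))
    (n : ℕ) :
    HasLeadingPow (wt d e) (.inl (.inr i)) (d ^ n) (FG k d e n (xi k d e i)).1 ∧
      HasLeadingPow (wt d e) (.inl (.inr i)) (d ^ n - e ^ n) (FG k d e n (xi k d e i)).2 := by
  induction n with
  | zero =>
    exact ⟨by simpa [FG, xi] using hasLeadingPow_X_pow (D := 1),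
      by simpa [FG] using hasLeadingPow_X_pow (D := 0)⟩
  | succ n ih =>
    have hpow : e ^ n ≤ d ^ n := Nat.pow_le_pow_left hed n
    have hAB : (d ^ n - e ^ n) * e + 1 < d ^ n * e := by
      have : 1 ≤ e ^ n := Nat.one_le_pow _ _ (by omega)
      zify [hpow] at this ⊢
      nlinarith
    refine ⟨?_, ?_⟩
    · have hdeg : d * d ^ n + (d - d) * (d ^ n - e ^ n) = d ^ (n + 1) := by
        rw [Nat.sub_self, zero_mul, add_zero, pow_succ']
      rw [← hdeg]
      exact ih.1.sum_mul_pow_mul_pow ih.2 hAB le_rfl (by simp [coefA])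
        fun j _ => coefA_mem_weightedDegreeLE k d e j
    · have hdeg :
          (d - e) * d ^ n + (d - (d - e)) * (d ^ n - e ^ n) = d ^ (n + 1) - e ^ (n + 1) := by
        have : e ^ (n + 1) ≤ d ^ (n + 1) := Nat.pow_le_pow_left hed _
        rw [Nat.sub_sub_self hed]
        zify [hed, hpow, this]
        ring
      rw [← hdeg]
      exact ih.1.sum_mul_pow_mul_pow ih.2 hAB (Nat.sub_le d e) (by simp [coefB])
        fun j _ => coefB_mem_weightedDegreeLE k d e j

theorem stmt4_general (k : Type) [Field k] (d e : ℕ) (he : 2 ≤ e) (hed : e ≤ d)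
    (m n : ℕ) (hm : 1 ≤ m) (hmn : m < n) (i : Fin (2 * d - 1 - e)) :
    weightedTotalDegree (wt d e)
        ((FG k d e (m - 1) (xi k d e i)).1 * (FG k d e (n - 1) (xi k d e i)).2 -
          (FG k d e (n - 1) (xi k d e i)).1 * (FG k d e (m - 1) (xi k d e i)).2) =
      e * (d ^ (n - 1) + d ^ (m - 1) - e ^ (m - 1)) ∧
    leadForm k d e
        ((FG k d e (m - 1) (xi k d e i)).1 * (FG k d e (n - 1) (xi k d e i)).2 -
          (FG k d e (n - 1) (xi k d e i)).1 * (FG k d e (m - 1) (xi k d e i)).2) =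
      -(xi k d e i) ^ (d ^ (n - 1) + d ^ (m - 1) - e ^ (m - 1)) := by
  obtain ⟨m, rfl⟩ : ∃ m', m = m' + 1 := ⟨m - 1, by omega⟩
  obtain ⟨n, rfl⟩ : ∃ n', n = n' + 1 := ⟨n - 1, by omega⟩
  simp only [Nat.add_sub_cancel]
  obtain ⟨hFm, hGm⟩ := hasLeadingPow_FG k he hed i m
  obtain ⟨hFn, hGn⟩ := hasLeadingPow_FG k he hed i n
  have hD : d ^ n + (d ^ m - e ^ m) = d ^ n + d ^ m - e ^ m := by
    have := Nat.pow_le_pow_left hed m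
    omega
  have hlt : d ^ m + (d ^ n - e ^ n) < d ^ n + d ^ m - e ^ m := by
    have := Nat.pow_lt_pow_right he (Nat.lt_of_succ_lt_succ hmn)
    have := Nat.pow_le_pow_left hed n
    omega
  have hlead := (hFm.mul hGn).sub_of_lt (hD ▸ hFn.mul hGm) hlt (by simp only [wt]; omega)
  rw [← neg_sub ((FG k d e n (xi k d e i)).1 * _)]
  obtain ⟨hdeg, hcomp⟩ :=
    hlead.weightedTotalDegree_neg_and_weightedHomogeneousComponent_neg
  rw [leadForm, hdeg, hcomp, mul_comm]
  exact ⟨rfl, rfl⟩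

/-- for `n > m ≥ 1` and `1 ≤ i ≤ N`, the element
`P_i = f_{m-1}(ξ_i) g_{n-1}(ξ_i) - f_{n-1}(ξ_i) g_{m-1}(ξ_i)` has weighted total degree
`e (d^{n-1} + d^{m-1} - e^{m-1})`, and its leading form is `-ξ_i^{d^{n-1}+d^{m-1}-e^{m-1}}`. -/
theorem stmt4 (k : Type) [Field k] (d e : ℕ) (hd : 2 ≤ d) (he : 2 ≤ e) (hed : e ≤ d)
    (m n : ℕ) (hm : 1 ≤ m) (hmn : m < n) (i : Fin (2 * d - 1 - e)) :
    weightedTotalDegree (wt d e)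
        ((FG k d e (m - 1) (xi k d e i)).1 * (FG k d e (n - 1) (xi k d e i)).2 -
          (FG k d e (n - 1) (xi k d e i)).1 * (FG k d e (m - 1) (xi k d e i)).2) =
      e * (d ^ (n - 1) + d ^ (m - 1) - e ^ (m - 1)) ∧
    leadForm k d e
        ((FG k d e (m - 1) (xi k d e i)).1 * (FG k d e (n - 1) (xi k d e i)).2 -
          (FG k d e (n - 1) (xi k d e i)).1 * (FG k d e (m - 1) (xi k d e i)).2) =
      -(xi k d e i) ^ (d ^ (n - 1) + d ^ (m - 1) - e ^ (m - 1)) :=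
  stmt4_general k d e he hed m n hm hmn i
end

section
/- Let f be a polynomial over k, let n ≥ 1, and let z ∈ k satisfy f^{∘n}(z) = z. Then the derivative of f^{∘n} evaluated at f(z) equals the derivative of f^{∘n} evaluated at z; that is, the multiplier is the same at every point of a single periodic cycle. -/
/-!
By the chain rule, `(f^{∘n})'(w) = ∏_{i<n} f'(f^{∘i}(w))`. At `w = f(z)` this product runs over
`f'(f^{∘1}(z)), …, f'(f^{∘n}(z))` and at `w = z` over `f'(f^{∘0}(z)), …, f'(f^{∘(n-1)}(z))`; since
`f^{∘n}(z) = z`, these are the same factors.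
-/

open Polynomial

/-- The `n`-fold composition `f^{∘n}` of a polynomial with itself, with `f^{∘0} = X`. -/
noncomputable def iterComp {k : Type*} [CommRing k] (f : Polynomial k) : ℕ → Polynomial k
  | 0 => X
  | n + 1 => (iterComp f n).comp f

theorem Finset.prod_range_succ_eq_prod_range_of_eq {M : Type*} [CommMonoid M] (b : ℕ → M)
    {n : ℕ} (hb : b n = b 0) : ∏ i ∈ range n, b (i + 1) = ∏ i ∈ range n, b i := by
  cases n with
  | zero => simp
  | succ m => rw [prod_range_succ, hb, ← prod_range_succ']

section iterComp

variable {k : Type*} [CommRing k] (f : Polynomial k)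

@[simp]
theorem iterComp_zero : iterComp f 0 = X := rfl

theorem iterComp_succ (n : ℕ) : iterComp f (n + 1) = (iterComp f n).comp f := rfl

theorem eval_iterComp_succ (n : ℕ) (w : k) :
    (iterComp f (n + 1)).eval w = (iterComp f n).eval (f.eval w) := by
  rw [iterComp_succ, eval_comp]

theorem eval_derivative_iterComp (n : ℕ) (w : k) :
    (derivative (iterComp f n)).eval w =
      ∏ i ∈ Finset.range n, (derivative f).eval ((iterComp f i).eval w) := by
  induction n generalizing w with
  | zero => simp
  | succ n ih =>
    rw [iterComp_succ, derivative_comp, eval_mul, eval_comp, ih, Finset.prod_range_succ',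
      iterComp_zero, eval_X]
    simp only [eval_iterComp_succ]
    exact mul_comm _ _

end iterComp

theorem stmt12_general {k : Type*} [CommRing k] (f : Polynomial k) (n : ℕ)
    (z : k) (hz : (iterComp f n).eval z = z) :
    (derivative (iterComp f n)).eval (f.eval z) = (derivative (iterComp f n)).eval z := by
  simp only [eval_derivative_iterComp, ← eval_iterComp_succ]
  exact Finset.prod_range_succ_eq_prod_range_of_eq
    (fun i => (derivative f).eval ((iterComp f i).eval z)) (by simp [hz])

/-- if `f^{∘n}(z) = z` then `(f^{∘n})'(f(z)) = (f^{∘n})'(z)`: the multiplier is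
the same at every point of a single periodic cycle. -/
theorem stmt12 {k : Type*} [CommRing k] (f : Polynomial k) (n : ℕ) (hn : 1 ≤ n)
    (z : k) (hz : (iterComp f n).eval z = z) :
    (derivative (iterComp f n)).eval (f.eval z) = (derivative (iterComp f n)).eval z :=
  stmt12_general f n z hz
end
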